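/- Let ν : ℝ → (0,∞) be smooth and bounded below by a positive constant, and let θ₀ be the optimal profile. Let B : ℝ → ℝ be continuous with |B(ρ)| ≤ C e^{-α|ρ|} for some C, α > 0. Then the equation (ν(θ₀) w')' = B on ℝ has a solution w ∈ C²(ℝ) ∩ L^∞(ℝ) if and only if ∫_ℝ B(ρ) dρ = 0; moreover if the condition holds, w_*(ρ) := ∫₀^ρ (1/ν(θ₀(r))) ∫_{-∞}^r B(s) ds dr is such a solution, and every bounded solution differs from w_* by a constant. -/

import Mathlib

open Filter Topology MeasureTheory intervalIntegral Set Real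




private lemma expIic_int {α : ℝ} (hα : 0 < α) (r : ℝ) :
    IntegrableOn (fun x : ℝ => Real.exp (α * x)) (Set.Iic r) := by
  rw [← Measure.map_neg_eq_self (volume : Measure ℝ)]
  have m : MeasurableEmbedding fun x : ℝ => -x := (Homeomorph.neg ℝ).measurableEmbedding
  rw [m.integrableOn_map_iff]
  simp only [Function.comp_def, neg_preimage, neg_Iic]
  exact Iff.mpr integrableOn_Ici_iff_integrableOn_Ioi
    ((exp_neg_integrableOn_Ioi (-r) hα).congr_fun (fun x _ => by ring_nf) measurableSet_Ioi)

private lemma expIic_val {α : ℝ} (hα : 0 < α) (r : ℝ) :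
    ∫ x in Set.Iic r, Real.exp (α * x) = Real.exp (α * r) / α := by
  have hd : ∀ x ∈ Set.Iic r, HasDerivAt (fun y => Real.exp (α * y) / α) (Real.exp (α * x)) x := by
    intro x _
    have h : HasDerivAt (fun y : ℝ => α * y) α x := by simpa using (hasDerivAt_id x).const_mul α
    have := h.exp.div_const α
    refine this.congr_deriv ?_
    field_simp
  have hlim : Tendsto (fun y => Real.exp (α * y) / α) atBot (𝓝 0) := by
    have h1 : Tendsto (fun y : ℝ => α * y) atBot atBot := tendsto_id.const_mul_atBot hα
    simpa using (Real.tendsto_exp_atBot.comp h1).div_const α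
  have := integral_Iic_of_hasDerivAt_of_tendsto' hd (expIic_int hα r) hlim
  simpa using this

private lemma expIoi_val {α : ℝ} (hα : 0 < α) (r : ℝ) :
    ∫ x in Set.Ioi r, Real.exp (-α * x) = Real.exp (-α * r) / α := by
  have hd : ∀ x ∈ Set.Ici r,
      HasDerivAt (fun y => -(Real.exp (-α * y) / α)) (Real.exp (-α * x)) x := by
    intro x _
    have h : HasDerivAt (fun y : ℝ => -α * y) (-α) x := by
      simpa using (hasDerivAt_id x).const_mul (-α)
    have := (h.exp.div_const α).neg
    refine this.congr_deriv ?_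
    field_simp
  have hlim : Tendsto (fun y => -(Real.exp (-α * y) / α)) atTop (𝓝 0) := by
    have h1 : Tendsto (fun y : ℝ => -α * y) atTop atBot :=
      tendsto_id.const_mul_atTop_of_neg (neg_lt_zero.mpr hα)
    simpa using ((Real.tendsto_exp_atBot.comp h1).div_const α).neg
  have := integral_Ioi_of_hasDerivAt_of_tendsto' hd (exp_neg_integrableOn_Ioi r hα) hlim
  simpa using this





private lemma deriv_lim_nonpos {w : ℝ → ℝ} (hw : Differentiable ℝ w) {M : ℝ}
    (hM : ∀ x, |w x| ≤ M) {l : ℝ} (hl : Tendsto (deriv w) atTop (𝓝 l)) : l ≤ 0 := by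
  by_contra hpos
  push_neg at hpos
  obtain ⟨R, hR⟩ := (hl.eventually (eventually_gt_nhds (half_lt_self hpos))).exists_forall_of_atTop
  have hM0 : 0 ≤ M := le_trans (abs_nonneg _) (hM 0)
  set f : ℝ → ℝ := fun x => w x - l / 2 * x with hf
  have hfd : Differentiable ℝ f := hw.sub (differentiable_id.const_mul _)
  have hmono : StrictMonoOn f (Set.Ici R) := by
    apply strictMonoOn_of_deriv_pos (convex_Ici R) hfd.continuous.continuousOn
    intro x hx
    rw [interior_Ici] at hx
    have hder : HasDerivAt f (deriv w x - l / 2) x := by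
      have h1 : HasDerivAt (fun y : ℝ => l / 2 * y) (l / 2) x := by
        simpa using (hasDerivAt_id x).const_mul (l / 2)
      exact (hw x).hasDerivAt.sub h1
    rw [hder.deriv]
    have := hR x (le_of_lt hx)
    linarith
  set x := R + (2 * (2 * M + 1)) / l with hx
  have hxR : R < x := by
    have h0 : 0 < (2 * (2 * M + 1)) / l := by positivity
    rw [hx]; linarith
  have := hmono (Set.self_mem_Ici) (le_of_lt hxR) hxR
  have hfx : f x = w x - l / 2 * x := rfl
  have hfR : f R = w R - l / 2 * R := rfl
  have hlx : l / 2 * (x - R) = 2 * M + 1 := by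
    rw [hx]
    field_simp
    ring
  have h1 := hM x
  have h2 := hM R
  rw [abs_le] at h1 h2
  have : w R - l/2 * R < w x - l/2 * x := this
  nlinarith [hlx]

private lemma deriv_lim_zero_atTop {w : ℝ → ℝ} (hw : Differentiable ℝ w) {M : ℝ}
    (hM : ∀ x, |w x| ≤ M) {l : ℝ} (hl : Tendsto (deriv w) atTop (𝓝 l)) : l = 0 := by
  have h1 := deriv_lim_nonpos hw hM hl
  have h2 : -l ≤ 0 := by
    apply deriv_lim_nonpos (w := fun x => -w x) hw.neg (M := M) (fun x => by simpa using hM x)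
    have : (deriv fun x => -w x) = fun x => -(deriv w x) := by
      funext x; exact deriv.neg
    rw [this]
    exact hl.neg
  linarith

private lemma deriv_lim_zero_atBot {w : ℝ → ℝ} (hw : Differentiable ℝ w) {M : ℝ}
    (hM : ∀ x, |w x| ≤ M) {l : ℝ} (hl : Tendsto (deriv w) atBot (𝓝 l)) : l = 0 := by
  set g : ℝ → ℝ := fun x => w (-x) with hg
  have hgd : ∀ x : ℝ, HasDerivAt g (-(deriv w (-x))) x := by
    intro x
    have h1 : HasDerivAt w (deriv w (-x)) (-x) := (hw (-x)).hasDerivAt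
    have := h1.comp x (hasDerivAt_neg x)
    exact this.congr_deriv (by ring)
  have hgdiff : Differentiable ℝ g := fun x => (hgd x).differentiableAt
  have hgderiv : Tendsto (deriv g) atTop (𝓝 (-l)) := by
    have : Tendsto (fun x : ℝ => -(deriv w (-x))) atTop (𝓝 (-l)) :=
      (hl.comp tendsto_neg_atTop_atBot).neg
    exact this.congr (fun x => ((hgd x).deriv).symm)
  have := deriv_lim_zero_atTop hgdiff (M := M) (fun x => hM (-x)) hgderiv
  linarith

/-- Solvability of the divergence-form ODE `(ν(θ₀) w')' = B` on `ℝ` for an exponentially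
decaying right-hand side: a bounded `C²` solution exists iff `∫_ℝ B = 0`; in that case
`w_*(ρ) = ∫₀^ρ (1/ν(θ₀(r))) ∫_{-∞}^r B(s) ds dr` is such a solution and every bounded `C²`
solution differs from `w_*` by a constant. -/
theorem divergence_form_ODE_solvability
    (ν : ℝ → ℝ) (hν : ContDiff ℝ (⊤ : ℕ∞) ν) (hνlow : ∃ c > (0:ℝ), ∀ s, c ≤ ν s)
    (θ₀ : ℝ → ℝ) (hθsmooth : ContDiff ℝ (⊤ : ℕ∞) θ₀)
    (hθtop : Tendsto θ₀ atTop (𝓝 1)) (hθbot : Tendsto θ₀ atBot (𝓝 (-1)))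
    (hθ0 : θ₀ 0 = 0)
    (B : ℝ → ℝ) (hB : Continuous B)
    (CB α : ℝ) (hCB : 0 < CB) (hα : 0 < α)
    (hBdecay : ∀ ρ : ℝ, |B ρ| ≤ CB * Real.exp (-α * |ρ|)) :
    ((∃ w : ℝ → ℝ, ContDiff ℝ 2 w ∧ (∃ M : ℝ, ∀ ρ, |w ρ| ≤ M) ∧
        (∀ ρ : ℝ, deriv (fun τ => ν (θ₀ τ) * deriv w τ) ρ = B ρ)) ↔
      (∫ ρ : ℝ, B ρ) = 0) ∧
    ((∫ ρ : ℝ, B ρ) = 0 →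
      (ContDiff ℝ 2 (fun ρ => ∫ r in (0:ℝ)..ρ, (1 / ν (θ₀ r)) * ∫ s in Set.Iic r, B s) ∧
        (∃ M : ℝ, ∀ ρ : ℝ,
          |∫ r in (0:ℝ)..ρ, (1 / ν (θ₀ r)) * ∫ s in Set.Iic r, B s| ≤ M) ∧
        (∀ ρ : ℝ, deriv (fun τ => ν (θ₀ τ) *
            deriv (fun σ => ∫ r in (0:ℝ)..σ, (1 / ν (θ₀ r)) * ∫ s in Set.Iic r, B s) τ) ρ
          = B ρ)) ∧
      (∀ w : ℝ → ℝ, ContDiff ℝ 2 w → (∃ M : ℝ, ∀ ρ, |w ρ| ≤ M) →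
        (∀ ρ : ℝ, deriv (fun τ => ν (θ₀ τ) * deriv w τ) ρ = B ρ) →
        ∃ cst : ℝ, ∀ ρ : ℝ,
          w ρ = (∫ r in (0:ℝ)..ρ, (1 / ν (θ₀ r)) * ∫ s in Set.Iic r, B s) + cst)) := by
  classical
  obtain ⟨c, hc, hclow⟩ := hνlow
  have hν₀pos : ∀ τ : ℝ, 0 < ν (θ₀ τ) := fun τ => lt_of_lt_of_le hc (hclow _)
  have hν₀ne : ∀ τ : ℝ, ν (θ₀ τ) ≠ 0 := fun τ => (hν₀pos τ).ne'
  have hν₀cont : Continuous (fun τ => ν (θ₀ τ)) := hν.continuous.comp hθsmooth.continuous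
  have hν₀smooth : ContDiff ℝ (⊤ : ℕ∞) (fun τ => ν (θ₀ τ)) := hν.comp hθsmooth
  -- integrability of the decay majorant and of B
  have hexpabs : Integrable (fun x : ℝ => Real.exp (-α * |x|)) := by
    have hIic : IntegrableOn (fun x : ℝ => Real.exp (-α * |x|)) (Set.Iic 0) :=
      (expIic_int hα 0).congr_fun
        (fun x hx => by rw [abs_of_nonpos (by exact hx)]; ring_nf) measurableSet_Iic
    have hIoi : IntegrableOn (fun x : ℝ => Real.exp (-α * |x|)) (Set.Ioi 0) :=
      (exp_neg_integrableOn_Ioi 0 hα).congr_fun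
        (fun x hx => by rw [abs_of_pos (by exact hx)]) measurableSet_Ioi
    have := hIic.union hIoi
    rw [Set.Iic_union_Ioi] at this
    exact integrableOn_univ.mp this
  have hBint : Integrable B := by
    refine (hexpabs.const_mul CB).mono' hB.aestronglyMeasurable ?_
    filter_upwards with x
    simpa [Real.norm_eq_abs] using hBdecay x
  set A : ℝ → ℝ := fun r => ∫ s in Set.Iic r, B s with hAdef
  have hAsub : ∀ r : ℝ, A r - A 0 = ∫ x in (0:ℝ)..r, B x := fun r =>
    integral_Iic_sub_Iic hBint.integrableOn hBint.integrableOn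
  have hAderiv : ∀ r : ℝ, HasDerivAt A (B r) r := by
    intro r
    have h1 : HasDerivAt (fun u => ∫ x in (0:ℝ)..u, B x) (B r) r :=
      intervalIntegral.integral_hasDerivAt_right (hB.intervalIntegrable 0 r)
        (hB.stronglyMeasurableAtFilter volume (𝓝 r)) hB.continuousAt
    have hfun : (fun u => A 0 + ∫ x in (0:ℝ)..u, B x) = A := funext fun u => by
      have := hAsub u; linarith
    exact hfun ▸ (h1.const_add (A 0))
  have hAcont : Continuous A :=
    continuous_iff_continuousAt.mpr fun r => (hAderiv r).continuousAt
  -- bound for r ≤ 0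
  have hAbound_neg : ∀ r : ℝ, r ≤ 0 → |A r| ≤ CB / α * Real.exp (α * r) := by
    intro r hr
    have h1 : |A r| ≤ ∫ s in Set.Iic r, |B s| := by
      simpa [Real.norm_eq_abs] using
        MeasureTheory.norm_integral_le_integral_norm (μ := volume.restrict (Set.Iic r)) B
    have h2 : ∫ s in Set.Iic r, |B s| ≤ ∫ s in Set.Iic r, CB * Real.exp (α * s) := by
      refine setIntegral_mono_on hBint.abs.integrableOn
        ((expIic_int hα r).const_mul CB) measurableSet_Iic ?_
      intro s hs
      have habs : |s| = -s := abs_of_nonpos (le_trans hs hr)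
      calc |B s| ≤ CB * Real.exp (-α * |s|) := hBdecay s
        _ = CB * Real.exp (α * s) := by rw [habs]; ring_nf
    have h3 : ∫ s in Set.Iic r, CB * Real.exp (α * s) = CB / α * Real.exp (α * r) := by
      rw [MeasureTheory.integral_const_mul, expIic_val hα r]
      field_simp
    linarith
  -- bound on the tail integral over Ioi r, for r ≥ 0 (no zero-mean assumption)
  have hIoiB : ∀ r : ℝ, 0 ≤ r → |∫ s in Set.Ioi r, B s| ≤ CB / α * Real.exp (-α * r) := by
    intro r hr
    have h1 : |∫ s in Set.Ioi r, B s| ≤ ∫ s in Set.Ioi r, |B s| := by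
      simpa [Real.norm_eq_abs] using
        MeasureTheory.norm_integral_le_integral_norm (μ := volume.restrict (Set.Ioi r)) B
    have h2 : ∫ s in Set.Ioi r, |B s| ≤ ∫ s in Set.Ioi r, CB * Real.exp (-α * s) := by
      refine setIntegral_mono_on hBint.abs.integrableOn
        ((exp_neg_integrableOn_Ioi r hα).const_mul CB) measurableSet_Ioi ?_
      intro s hs
      have habs : |s| = s := abs_of_nonneg (le_of_lt (lt_of_le_of_lt hr hs))
      calc |B s| ≤ CB * Real.exp (-α * |s|) := hBdecay s
        _ = CB * Real.exp (-α * s) := by rw [habs]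
    have h3 : ∫ s in Set.Ioi r, CB * Real.exp (-α * s) = CB / α * Real.exp (-α * r) := by
      rw [MeasureTheory.integral_const_mul, expIoi_val hα r]
      field_simp
    linarith
  have hsplit : ∀ r : ℝ, A r + ∫ s in Set.Ioi r, B s = ∫ s : ℝ, B s := fun r =>
    integral_Iic_add_Ioi hBint.integrableOn hBint.integrableOn
  -- limits of A
  have hAbot : Tendsto A atBot (𝓝 0) := by
    apply squeeze_zero_norm' (a := fun r => CB / α * Real.exp (α * r))
    · filter_upwards [Iic_mem_atBot (0:ℝ)] with r hr
      simpa [Real.norm_eq_abs] using hAbound_neg r hr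
    · have h1 : Tendsto (fun r : ℝ => α * r) atBot atBot := tendsto_id.const_mul_atBot hα
      simpa using (Real.tendsto_exp_atBot.comp h1).const_mul (CB / α)
  have hAtop : Tendsto A atTop (𝓝 (∫ s : ℝ, B s)) := by
    have htail : Tendsto (fun r : ℝ => ∫ s in Set.Ioi r, B s) atTop (𝓝 0) := by
      apply squeeze_zero_norm' (a := fun r => CB / α * Real.exp (-α * r))
      · filter_upwards [Ici_mem_atTop (0:ℝ)] with r hr
        simpa [Real.norm_eq_abs] using hIoiB r hr
      · have h1 : Tendsto (fun r : ℝ => -α * r) atTop atBot :=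
          tendsto_id.const_mul_atTop_of_neg (neg_lt_zero.mpr hα)
        simpa using (Real.tendsto_exp_atBot.comp h1).const_mul (CB / α)
    have := (tendsto_const_nhds (x := ∫ s : ℝ, B s)).sub htail
    rw [sub_zero] at this
    exact this.congr fun r => by have := hsplit r; linarith

  have h21 : (2 : WithTop ℕ∞) = 1 + 1 := by norm_num
  have hνtop : Tendsto (fun τ => ν (θ₀ τ)) atTop (𝓝 (ν 1)) :=
    ((hν.continuous.tendsto 1).comp hθtop)
  have hνbot : Tendsto (fun τ => ν (θ₀ τ)) atBot (𝓝 (ν (-1))) :=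
    ((hν.continuous.tendsto (-1)).comp hθbot)
  have hν1 : ν 1 ≠ 0 := (lt_of_lt_of_le hc (hclow 1)).ne'
  have hνm1 : ν (-1) ≠ 0 := (lt_of_lt_of_le hc (hclow (-1))).ne'
  -- the key analysis of any bounded C² solution
  have main : ∀ w : ℝ → ℝ, ContDiff ℝ 2 w → (∃ M : ℝ, ∀ ρ, |w ρ| ≤ M) →
      (∀ ρ : ℝ, deriv (fun τ => ν (θ₀ τ) * deriv w τ) ρ = B ρ) →
      ((∫ ρ : ℝ, B ρ) = 0 ∧ ∀ τ : ℝ, ν (θ₀ τ) * deriv w τ = A τ) := by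
    rintro w hw2 ⟨M, hM⟩ hweq
    have hw2' := contDiff_succ_iff_deriv.mp (h21 ▸ hw2)
    have hwdiff : Differentiable ℝ w := hw2'.1
    have hw' : ContDiff ℝ 1 (deriv w) := hw2'.2.2
    have hFdiff : Differentiable ℝ (fun τ => ν (θ₀ τ) * deriv w τ) :=
      (hν₀smooth.differentiable (by simp)).mul (hw'.differentiable one_ne_zero)
    have hFder : ∀ ρ : ℝ, HasDerivAt (fun τ => ν (θ₀ τ) * deriv w τ) (B ρ) ρ := fun ρ => by
      have := (hFdiff ρ).hasDerivAt
      rwa [hweq ρ] at this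
    have hFTC : ∀ ρ : ℝ, ν (θ₀ ρ) * deriv w ρ = ν (θ₀ 0) * deriv w 0 + (A ρ - A 0) := by
      intro ρ
      have h := intervalIntegral.integral_eq_sub_of_hasDerivAt
        (f := fun τ => ν (θ₀ τ) * deriv w τ) (fun x _ => hFder x) (hB.intervalIntegrable 0 ρ)
      have h2 := hAsub ρ
      linarith
    have hFtop : Tendsto (fun τ => ν (θ₀ τ) * deriv w τ) atTop
        (𝓝 (ν (θ₀ 0) * deriv w 0 + ((∫ s : ℝ, B s) - A 0))) := by
      have := (tendsto_const_nhds (x := ν (θ₀ 0) * deriv w 0)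
        (f := atTop (α := ℝ))).add (hAtop.sub_const (A 0))
      exact this.congr fun ρ => (hFTC ρ).symm
    have hFbot : Tendsto (fun τ => ν (θ₀ τ) * deriv w τ) atBot
        (𝓝 (ν (θ₀ 0) * deriv w 0 + (0 - A 0))) := by
      have := (tendsto_const_nhds (x := ν (θ₀ 0) * deriv w 0)
        (f := atBot (α := ℝ))).add (hAbot.sub_const (A 0))
      exact this.congr fun ρ => (hFTC ρ).symm
    have hwtop : Tendsto (deriv w) atTop
        (𝓝 ((ν (θ₀ 0) * deriv w 0 + ((∫ s : ℝ, B s) - A 0)) / ν 1)) := by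
      have := hFtop.div hνtop hν1
      exact this.congr fun τ => by
        simp only [Pi.div_apply]
        rw [mul_div_cancel_left₀ _ (hν₀ne τ)]
    have hwbot : Tendsto (deriv w) atBot
        (𝓝 ((ν (θ₀ 0) * deriv w 0 + (0 - A 0)) / ν (-1))) := by
      have := hFbot.div hνbot hνm1
      exact this.congr fun τ => by
        simp only [Pi.div_apply]
        rw [mul_div_cancel_left₀ _ (hν₀ne τ)]
    have htopzero := deriv_lim_zero_atTop hwdiff hM hwtop
    have hbotzero := deriv_lim_zero_atBot hwdiff hM hwbot
    have e1 : ν (θ₀ 0) * deriv w 0 + ((∫ s : ℝ, B s) - A 0) = 0 := by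
      rcases div_eq_zero_iff.mp htopzero with h | h
      · exact h
      · exact absurd h hν1
    have e2 : ν (θ₀ 0) * deriv w 0 + (0 - A 0) = 0 := by
      rcases div_eq_zero_iff.mp hbotzero with h | h
      · exact h
      · exact absurd h hνm1
    constructor
    · linarith
    · intro τ
      rw [hFTC τ]
      linarith
  -- the candidate solution W and its properties
  set gW : ℝ → ℝ := fun r => 1 / ν (θ₀ r) * A r with hgdef
  set W : ℝ → ℝ := fun ρ => ∫ r in (0:ℝ)..ρ, gW r with hWdef
  have hgcont : Continuous gW := (continuous_const.div hν₀cont hν₀ne).mul hAcont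
  have hWd : ∀ σ : ℝ, HasDerivAt W (gW σ) σ := fun σ =>
    intervalIntegral.integral_hasDerivAt_right (hgcont.intervalIntegrable 0 σ)
      (hgcont.stronglyMeasurableAtFilter volume (𝓝 σ)) hgcont.continuousAt
  have hWderiv : deriv W = gW := funext fun σ => (hWd σ).deriv
  have hWdiff : Differentiable ℝ W := fun σ => (hWd σ).differentiableAt
  have hA1 : ContDiff ℝ 1 A := by
    refine contDiff_one_iff_deriv.mpr ⟨fun r => (hAderiv r).differentiableAt, ?_⟩
    have : deriv A = B := funext fun r => (hAderiv r).deriv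
    rw [this]; exact hB
  have hg1 : ContDiff ℝ 1 gW :=
    (contDiff_const.div (hν₀smooth.of_le (by simp)) hν₀ne).mul hA1
  have hW2 : ContDiff ℝ 2 W := by
    rw [h21, contDiff_succ_iff_deriv]
    refine ⟨hWdiff, by norm_num, ?_⟩
    rw [hWderiv]; exact hg1
  have hWfun : (fun τ => ν (θ₀ τ) * deriv W τ) = A := by
    funext τ
    rw [hWderiv, hgdef]
    simp only [one_div]
    rw [← mul_assoc, mul_inv_cancel₀ (hν₀ne τ), one_mul]
  have hWode : ∀ ρ : ℝ, deriv (fun τ => ν (θ₀ τ) * deriv W τ) ρ = B ρ := by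
    intro ρ
    rw [hWfun]
    exact (hAderiv ρ).deriv
  -- boundedness of W under the zero-mean condition
  have hWbdd : (∫ ρ : ℝ, B ρ) = 0 → ∃ M : ℝ, ∀ ρ : ℝ, |W ρ| ≤ M := by
    intro hI
    have hAbound : ∀ r : ℝ, |A r| ≤ CB / α * Real.exp (-α * |r|) := by
      intro r
      rcases le_total r 0 with h | h
      · have := hAbound_neg r h
        rw [abs_of_nonpos h]
        calc |A r| ≤ CB / α * Real.exp (α * r) := this
          _ = CB / α * Real.exp (-α * -r) := by ring_nf
      · have h0 : A r = -∫ s in Set.Ioi r, B s := by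
          have := hsplit r
          rw [hI] at this
          linarith
        rw [h0, abs_neg, abs_of_nonneg h]
        exact hIoiB r h
    have hgint : Integrable gW := by
      refine (hexpabs.const_mul (CB / α / c)).mono' hgcont.aestronglyMeasurable ?_
      filter_upwards with r
      have h1 : ‖gW r‖ = 1 / ν (θ₀ r) * |A r| := by
        rw [hgdef]
        simp only [Real.norm_eq_abs, abs_mul]
        rw [abs_of_pos (one_div_pos.mpr (hν₀pos r))]
      rw [h1]
      have h2 : 1 / ν (θ₀ r) ≤ 1 / c := one_div_le_one_div_of_le hc (hclow _)
      have h3 := hAbound r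
      calc 1 / ν (θ₀ r) * |A r| ≤ 1 / c * (CB / α * Real.exp (-α * |r|)) := by
            apply mul_le_mul h2 h3 (abs_nonneg _) (by positivity)
        _ = CB / α / c * Real.exp (-α * |r|) := by ring
    refine ⟨∫ r : ℝ, |gW r|, ?_⟩
    have habs : ∀ a b : ℝ, a ≤ b → |∫ r in a..b, gW r| ≤ ∫ r : ℝ, |gW r| := by
      intro a b hab
      rw [intervalIntegral.integral_of_le hab]
      have hone : |∫ r in Set.Ioc a b, gW r| ≤ ∫ r in Set.Ioc a b, |gW r| := by
        simpa [Real.norm_eq_abs] using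
          MeasureTheory.norm_integral_le_integral_norm (μ := volume.restrict (Set.Ioc a b)) gW
      have htwo : ∫ r in Set.Ioc a b, |gW r| ≤ ∫ r : ℝ, |gW r| :=
        setIntegral_le_integral hgint.abs (by filter_upwards with x using abs_nonneg _)
      linarith
    intro ρ
    rcases le_total 0 ρ with h | h
    · exact habs 0 ρ h
    · rw [hWdef]
      simp only
      rw [intervalIntegral.integral_symm, abs_neg]
      exact habs ρ 0 h
  -- uniqueness up to constants
  have huniq : (∫ ρ : ℝ, B ρ) = 0 → ∀ w : ℝ → ℝ, ContDiff ℝ 2 w →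
      (∃ M : ℝ, ∀ ρ, |w ρ| ≤ M) →
      (∀ ρ : ℝ, deriv (fun τ => ν (θ₀ τ) * deriv w τ) ρ = B ρ) →
      ∃ cst : ℝ, ∀ ρ : ℝ, w ρ = W ρ + cst := by
    intro _ w hw2 hMw hweq
    obtain ⟨-, hFA⟩ := main w hw2 hMw hweq
    have hwdiff : Differentiable ℝ w := hw2.differentiable (by norm_num)
    have hdeq : ∀ τ : ℝ, deriv w τ = deriv W τ := by
      intro τ
      apply mul_left_cancel₀ (hν₀ne τ)
      rw [hFA τ]
      have := congrFun hWfun τ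
      rw [this]
    refine ⟨w 0 - W 0, fun ρ => ?_⟩
    have hu : ∀ x y : ℝ, w x - W x = w y - W y := by
      apply is_const_of_deriv_eq_zero (hwdiff.sub hWdiff)
      intro x
      rw [deriv_sub (hwdiff x) (hWdiff x), hdeq x, sub_self]
    have := hu ρ 0
    linarith
  
  -- assembly
  have hW2' : ContDiff ℝ 2
      (fun ρ => ∫ r in (0:ℝ)..ρ, (1 / ν (θ₀ r)) * ∫ s in Set.Iic r, B s) := by
    have h := hW2
    simp only [hWdef, hgdef, hAdef] at h
    exact h
  have hWbdd' : (∫ ρ : ℝ, B ρ) = 0 → ∃ M : ℝ, ∀ ρ : ℝ,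
      |∫ r in (0:ℝ)..ρ, (1 / ν (θ₀ r)) * ∫ s in Set.Iic r, B s| ≤ M := by
    intro hI
    obtain ⟨M, hM⟩ := hWbdd hI
    refine ⟨M, fun ρ => ?_⟩
    have h := hM ρ
    simp only [hWdef, hgdef, hAdef] at h
    exact h
  have hWode' : ∀ ρ : ℝ, deriv (fun τ => ν (θ₀ τ) *
      deriv (fun σ => ∫ r in (0:ℝ)..σ, (1 / ν (θ₀ r)) * ∫ s in Set.Iic r, B s) τ) ρ = B ρ := by
    intro ρ
    have h := hWode ρ
    simp only [hWdef, hgdef, hAdef] at h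
    exact h
  refine ⟨⟨?_, ?_⟩, fun hI => ⟨⟨hW2', hWbdd' hI, hWode'⟩, ?_⟩⟩
  · rintro ⟨w, h1, h2, h3⟩
    exact (main w h1 h2 h3).1
  · intro hI
    exact ⟨_, hW2', hWbdd' hI, hWode'⟩
  · intro w hw2 hMw hweq
    obtain ⟨cst, hcw⟩ := huniq hI w hw2 hMw hweq
    refine ⟨cst, fun ρ => ?_⟩
    have h := hcw ρ
    simp only [hWdef, hgdef, hAdef] at h
    exact h
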